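/- Let q ≥ 1 be a perfect square, and for c ∈ {0,…,q−1} define x(c) = (c mod √q − √q) + (⌊c/√q⌋ − √q)·i. Define the decoder on a Gaussian integer g by D(g) = (Re(g) + K√q) + √q·(Im(g) + K√q), i.e., D(g) = Re(g) + √q·Im(g) + K(√q + q). Then for any c_1, …, c_K ∈ {0,…,q−1}, D(∑_{k=1}^K x(c_k)) = ∑_{k=1}^K c_k. -/
import Mathlib

/-- SumComp with QAM of order `q = s²`: the decoder
`D(g) = Re g + √q · Im g + K(√q + q)` applied to the sum of the encoded points
recovers the sum of the messages. -/
theorem qam_sum_decode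
    (q s : ℤ) (hq : 1 ≤ q) (hs : q = s * s) (hs0 : 0 < s)
    (K : ℕ) (c : Fin K → ℤ) (hc : ∀ k, c k ∈ Set.Ico 0 q)
    (x : Fin K → GaussianInt)
    (hx : ∀ k, x k = ⟨c k % s - s, c k / s - s⟩) :
    (∑ k, x k).re + s * (∑ k, x k).im + (K : ℤ) * (s + q) = ∑ k, c k := by
  have hre : (∑ k, x k).re = ∑ k, (x k).re :=
    map_sum (AddMonoidHom.mk' Zsqrtd.re (fun a b => Zsqrtd.re_add a b)) _ _
  have him : (∑ k, x k).im = ∑ k, (x k).im :=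
    map_sum (AddMonoidHom.mk' Zsqrtd.im (fun a b => Zsqrtd.im_add a b)) _ _
  simp only [hx] at hre him ⊢
  rw [hre, him, hs]
  simp only [Finset.sum_sub_distrib, Finset.sum_const, Finset.card_univ,
    Fintype.card_fin, smul_eq_mul, Finset.mul_sum]
  have key : ∑ k, (c k % s + s * (c k / s)) = ∑ k, c k := by
    simp [Int.emod_add_mul_ediv]
  rw [← key, Finset.sum_add_distrib]
  rw [← Finset.mul_sum]
  simp only [nsmul_eq_mul]
  ring
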